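/- arXiv:2005.10809 — 6 statements merged into one kernel-verified Lean document; each statement's English description precedes it below -/
import Mathlib

section
/- Let k ≥ 2 and A = {a_0, a_1, ..., a_k} with 0 = a_0 < a_1 < ... < a_k and gcd(A) = 1. For every positive integer t, set c'_t = (t·a_k − 1)·(a_1 + ... + a_{k−1}) and d'_t = (k−1)(t·a_k − 1)·a_k. Then for every positive integer h, every integer n with c'_t ≤ n ≤ h·a_k − d'_t has at least t representations as a sum of h elements of A; that is, [c'_t, h·a_k − d'_t] ⊆ (hA)^{(t)}. -/
/-!
Since `gcd A = 1`, Bézout gives `n = ∑_{0<j<k} x_j a_j + z a_k` with `0 ≤ x_j < a_k`. The lower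
bound `c'_t ≤ n` forces `z ≥ (t - 1) a_1`, so for every `i < t` one may trade `i a_1` copies of
`a_k` for `i a_k` copies of `a_1` without changing the sum; the upper bound `n ≤ h a_k - d'_t`
leaves room to pad each of these `t` representations with zeros to exactly `h` summands. They are
distinct because `a_1` occurs a different number of times in each.
-/

open Finset

/-- `r_{A,h}(n)`: the number of multiset representations of `n` as a sum of `h` elements of `A`. -/
def repCount (A : Finset ℤ) (h : ℕ) (n : ℤ) : ℕ :=
  ((A.sym h).filter (fun m => (Sym.toMultiset m).sum = n)).card

/-- `(hA)^{(t)}`: integers with at least `t` representations. -/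
def sumsetT (A : Finset ℤ) (h t : ℕ) : Set ℤ :=
  {n | t ≤ repCount A h n}

theorem card_le_repCount_of_injOn {ι : Type*} {A : Finset ℤ} {h : ℕ} {n : ℤ}
    (I : Finset ι) (M : ι → Multiset ℤ) (hA : ∀ i ∈ I, ∀ b ∈ M i, b ∈ A)
    (hcard : ∀ i ∈ I, Multiset.card (M i) = h) (hsum : ∀ i ∈ I, (M i).sum = n)
    (hinj : Set.InjOn M I) : #I ≤ repCount A h n := by
  calc #I = #(I.image M) := (card_image_of_injOn hinj).symm
    _ ≤ #(((A.sym h).filter fun m => (Sym.toMultiset m).sum = n).image Sym.toMultiset) := by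
      refine card_le_card fun m hm => ?_
      obtain ⟨i, hi, rfl⟩ := mem_image.1 hm
      exact mem_image.2 ⟨⟨M i, hcard i hi⟩, mem_filter.2 ⟨mem_sym_iff.2 (hA i hi), hsum i hi⟩, rfl⟩
    _ ≤ repCount A h n := card_image_le

theorem le_repCount_of_trade {A : Finset ℤ} {M₀ : Multiset ℤ} {p q z : ℤ} {t h : ℕ}
    (h0A : 0 ∈ A) (hpA : p ∈ A) (hqA : q ∈ A) (hM₀ : ∀ b ∈ M₀, b ∈ A)
    (hp : 0 < p) (hpq : p < q) (ht : 0 < t) (hz : (t - 1) * p ≤ z)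
    (hh : Multiset.card M₀ + z + (t - 1) * (q - p) ≤ h) :
    t ≤ repCount A h (M₀.sum + z * q) := by
  have ht' : (0 : ℤ) ≤ t - 1 := by omega
  lift p to ℕ using hp.le
  lift q to ℕ using (hp.trans hpq).le
  lift z to ℕ using le_trans (by positivity) hz
  have hpq' : p ≤ q := by exact_mod_cast hpq.le
  have hbound : ∀ i ∈ range t, i * p ≤ z ∧ Multiset.card M₀ + z + i * (q - p) ≤ h := by
    intro i hi
    have hi : (i : ℤ) ≤ t - 1 := by have := mem_range.1 hi; omega
    constructor
    · exact_mod_cast (mul_le_mul_of_nonneg_right hi (by positivity)).trans hz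
    · have : (i : ℤ) * (q - p) ≤ (t - 1) * (q - p) := mul_le_mul_of_nonneg_right hi (by omega)
      zify [hpq']
      linarith
  let M : ℕ → Multiset ℤ := fun i =>
    Multiset.replicate (h - (Multiset.card M₀ + z + i * (q - p))) 0 + M₀ +
      Multiset.replicate (i * q) (p : ℤ) + Multiset.replicate (z - i * p) (q : ℤ)
  have hcount : ∀ i, Multiset.count (p : ℤ) (M i) = Multiset.count (p : ℤ) M₀ + i * q := by
    intro i
    simp [M, Multiset.count_replicate, hp.ne, hpq.ne']
  refine (card_range t).symm.le.trans (card_le_repCount_of_injOn _ M ?_ ?_ ?_ ?_)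
  · intro i _ b hb
    simp only [M, Multiset.mem_add, Multiset.mem_replicate] at hb
    rcases hb with ((⟨_, rfl⟩ | hb) | ⟨_, rfl⟩) | ⟨_, rfl⟩
    exacts [h0A, hM₀ b hb, hpA, hqA]
  · intro i hi
    obtain ⟨hip, hih⟩ := hbound i hi
    have : i * p ≤ i * q := Nat.mul_le_mul_left i hpq'
    simp only [M, Multiset.card_add, Multiset.card_replicate, Nat.mul_sub] at hih ⊢
    omega
  · intro i hi
    simp only [M, Multiset.sum_add, Multiset.sum_replicate, nsmul_eq_mul]
    push_cast [hbound i hi |>.1]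
    ring
  · intro i _ j _ hij
    have := congrArg (Multiset.count (p : ℤ)) hij
    rw [hcount, hcount] at this
    exact Nat.eq_of_mul_eq_mul_right (by omega : 0 < q) (by omega)

theorem exists_multiset_card_eq_sum_eq {ι : Type*} {A : Finset ℤ} (s : Finset ι) (a : ι → ℤ)
    (x : ι → ℕ) (hA : ∀ j ∈ s, a j ∈ A) :
    ∃ M : Multiset ℤ, (∀ b ∈ M, b ∈ A) ∧ Multiset.card M = ∑ j ∈ s, x j ∧
      M.sum = ∑ j ∈ s, (x j : ℤ) * a j := by
  refine ⟨∑ j ∈ s, Multiset.replicate (x j) (a j), fun b hb => ?_, by simp, ?_⟩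
  · obtain ⟨j, hj, hb⟩ := Multiset.mem_sum.1 hb
    exact Multiset.eq_of_mem_replicate hb ▸ hA j hj
  · have := map_sum Multiset.sumAddMonoidHom (fun j => Multiset.replicate (x j) (a j)) s
    simpa only [Multiset.coe_sumAddMonoidHom, Multiset.sum_replicate, nsmul_eq_mul] using this

theorem exists_coeffs_lt_of_gcd_eq_one {ι : Type*} (s : Finset ι) (a : ι → ℤ) {m : ℤ}
    (hm : 0 < m) (hgcd : gcd (s.gcd a) m = 1) (n : ℤ) :
    ∃ x : ι → ℕ, ∃ z : ℤ, (∀ j, (x j : ℤ) < m) ∧ n = ∑ j ∈ s, (x j : ℤ) * a j + z * m := by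
  obtain ⟨c, hc⟩ := s.gcd_eq_sum_mul a
  obtain ⟨u, v, huv⟩ := exists_gcd_eq_mul_add_mul (s.gcd a) m
  set y : ι → ℤ := fun j => n * u * c j
  have hy : ∑ j ∈ s, y j * a j = n * u * s.gcd a := by
    rw [hc, mul_sum]
    exact sum_congr rfl fun j _ => by ring
  refine ⟨fun j => (y j % m).toNat, n * v + ∑ j ∈ s, y j / m * a j, fun j => ?_, ?_⟩
  · rw [Int.toNat_of_nonneg (Int.emod_nonneg _ hm.ne')]
    exact Int.emod_lt_of_pos _ hm
  · simp only [Int.toNat_of_nonneg (Int.emod_nonneg _ hm.ne')]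
    have hsum : ∑ j ∈ s, y j % m * a j + ∑ j ∈ s, y j / m * a j * m = ∑ j ∈ s, y j * a j := by
      rw [← sum_add_distrib]
      exact sum_congr rfl fun j _ => by linear_combination a j * Int.mul_ediv_add_emod (y j) m
    rw [add_mul, sum_mul]
    linear_combination n * (hgcd.symm.trans huv) - hsum - hy

theorem gcd_image_range_succ {a : ℕ → ℤ} {k : ℕ} (ha0 : a 0 = 0) :
    ((range (k + 1)).image a).gcd id = gcd ((Icc 1 (k - 1)).gcd a) (a k) := by
  have hsplit : range (k + 1) = insert 0 (insert k (Icc 1 (k - 1))) := by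
    ext i
    simp only [mem_range, mem_insert, mem_Icc]
    omega
  rw [gcd_image, Function.id_comp, hsplit, gcd_insert, gcd_insert, ha0, gcd_zero_left,
    _root_.normalize_gcd, gcd_comm]

theorem sum_mul_le_of_lt {ι : Type*} {s : Finset ι} {a : ι → ℤ} {x : ι → ℕ} {m : ℤ}
    (ha : ∀ j ∈ s, 0 ≤ a j) (hx : ∀ j, (x j : ℤ) < m) :
    ∑ j ∈ s, (x j : ℤ) * a j ≤ (m - 1) * ∑ j ∈ s, a j := by
  rw [mul_sum]
  exact sum_le_sum fun j hj => mul_le_mul_of_nonneg_right (by linarith [hx j]) (ha j hj)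

theorem trade_room_of_mem_Icc {k t h a₁ aₖ σ X S z : ℤ} (hk : 2 ≤ k) (ht : 1 ≤ t) (ha₁ : 0 < a₁)
    (ha₁ₖ : a₁ < aₖ) (hσ : a₁ ≤ σ) (hX : X ≤ (k - 1) * (aₖ - 1)) (hS₀ : 0 ≤ S)
    (hS : S ≤ (aₖ - 1) * σ) (hlo : (t * aₖ - 1) * σ ≤ S + z * aₖ)
    (hhi : S + z * aₖ ≤ h * aₖ - (k - 1) * (t * aₖ - 1) * aₖ) :
    (t - 1) * a₁ ≤ z ∧ X + z + (t - 1) * (aₖ - a₁) ≤ h := by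
  have haₖ : 0 < aₖ := ha₁.trans ha₁ₖ
  have ht₁ : 0 ≤ (t - 1) * aₖ := mul_nonneg (by linarith) haₖ.le
  have hzlo : (t - 1) * a₁ * aₖ ≤ z * aₖ := by
    nlinarith [mul_le_mul_of_nonneg_left hσ ht₁]
  have hzhi : z * aₖ ≤ (h - (k - 1) * (t * aₖ - 1)) * aₖ := by nlinarith
  have hz := le_of_mul_le_mul_right hzlo haₖ
  refine ⟨hz, ?_⟩
  nlinarith [le_of_mul_le_mul_right hzhi haₖ, mul_nonneg (by linarith : (0 : ℤ) ≤ k - 2) ht₁,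
    mul_nonneg (by linarith : (0 : ℤ) ≤ t - 1) ha₁.le]

theorem stmt1_general (k : ℕ) (hk : 2 ≤ k) (a : ℕ → ℤ)
    (ha0 : a 0 = 0) (hmono : ∀ i j, i ≤ k → j ≤ k → i < j → a i < a j)
    (A : Finset ℤ) (hA : A = (Finset.range (k + 1)).image a)
    (hgcd : A.gcd id = 1)
    (t : ℕ) (ht : 0 < t)
    (c' d' : ℤ)
    (hc' : c' = ((t : ℤ) * a k - 1) * ∑ j ∈ Finset.Icc 1 (k - 1), a j)
    (hd' : d' = ((k : ℤ) - 1) * ((t : ℤ) * a k - 1) * a k)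
    (h : ℕ) :
    Set.Icc c' ((h : ℤ) * a k - d') ⊆ sumsetT A h t := by
  rintro n ⟨hlo, hhi⟩
  have hpos : ∀ j, 1 ≤ j → j ≤ k → 0 < a j := fun j h1 h2 =>
    ha0 ▸ hmono 0 j (by omega) h2 (by omega)
  have hpos' : ∀ j ∈ Icc 1 (k - 1), 0 ≤ a j := fun j hj =>
    (hpos j (mem_Icc.1 hj).1 (by have := (mem_Icc.1 hj).2; omega)).le
  have hmem : ∀ j ≤ k, a j ∈ A := fun j hj => hA ▸ mem_image_of_mem a (mem_range.2 (by omega))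
  have ha₁ₖ : a 1 < a k := hmono 1 k (by omega) le_rfl (by omega)
  rw [hA, gcd_image_range_succ ha0] at hgcd
  obtain ⟨x, z, hxk, rfl⟩ := exists_coeffs_lt_of_gcd_eq_one _ a (hpos k (by omega) le_rfl) hgcd n
  obtain ⟨M₀, hM₀, hcard, hsum⟩ := exists_multiset_card_eq_sum_eq (Icc 1 (k - 1)) a x
    fun j hj => hmem j (by have := (mem_Icc.1 hj).2; omega)
  have hcard' : (Multiset.card M₀ : ℤ) ≤ (k - 1) * (a k - 1) := by
    have hIcc : ((#(Icc 1 (k - 1)) : ℕ) : ℤ) = k - 1 := by simp only [Nat.card_Icc]; omega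
    rw [hcard, Nat.cast_sum, ← hIcc, ← nsmul_eq_mul]
    exact sum_le_card_nsmul _ _ _ fun j _ => by linarith [hxk j]
  obtain ⟨hz, hroom⟩ := trade_room_of_mem_Icc (by exact_mod_cast hk) (by exact_mod_cast ht)
    (hpos 1 le_rfl (by omega)) ha₁ₖ (single_le_sum hpos' (by simp; omega)) hcard'
    (sum_nonneg fun j hj => mul_nonneg (by positivity) (hpos' j hj)) (sum_mul_le_of_lt hpos' hxk)
    (hc' ▸ hlo) (hd' ▸ hhi)
  rw [sumsetT, Set.mem_ofPred_eq, ← hsum]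
  exact le_repCount_of_trade (ha0 ▸ hmem 0 (by omega)) (hmem 1 (by omega)) (hmem k le_rfl)
    hM₀ (hpos 1 le_rfl (by omega)) ha₁ₖ ht hz hroom

theorem stmt1 (k : ℕ) (hk : 2 ≤ k) (a : ℕ → ℤ)
    (ha0 : a 0 = 0) (hmono : ∀ i j, i ≤ k → j ≤ k → i < j → a i < a j)
    (A : Finset ℤ) (hA : A = (Finset.range (k + 1)).image a)
    (hgcd : A.gcd id = 1)
    (t : ℕ) (ht : 0 < t)
    (c' d' : ℤ)
    (hc' : c' = ((t : ℤ) * a k - 1) * ∑ j ∈ Finset.Icc 1 (k - 1), a j)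
    (hd' : d' = ((k : ℤ) - 1) * ((t : ℤ) * a k - 1) * a k)
    (h : ℕ) (hh : 0 < h) :
    Set.Icc c' ((h : ℤ) * a k - d') ⊆ sumsetT A h t :=
  stmt1_general k hk a ha0 hmono A hA hgcd t ht c' d' hc' hd' h
end

section
/- Let A = {a_0, ..., a_k} be a finite set of integers with 0 = a_0 < a_1 < ... < a_k and gcd(A) = 1, with k ≥ 2. For every positive integer t, with h_t = (k−1)(t·a_k − 1)·a_k + 1, there exist nonnegative integers c_t, d_t and finite sets C_t ⊆ [0, c_t − 2], D_t ⊆ [0, d_t − 2] such that for all h ≥ h_t, (hA)^{(t)} = C_t ∪ [c_t, h·a_k − d_t] ∪ (h·a_k − D_t). -/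
/-!
Since `0 ∈ A ⊆ [0, a_k]`, adding or removing zeros shows that `r_{A,h}(n)` does not depend on `h`
once `h ≥ n`, and the reflection `x ↦ a_k - x` turns the top of `hA` into the bottom of
`h(a_k - A)`. Hence both ends of `(hA)^{(t)}`, up to `w = (t a_k - 1) a_k`, are frozen once
`h ≥ w`; they determine `c_t, C_t` and `d_t, D_t`. The middle `[w, h a_k - w]` is full: as
`gcd A = 1`, sums of `a_k - 1` elements of `A` hit every residue mod `a_k`, so `n = s + q a_k` for
such a sum `s`, and trading `j a_1` copies of `a_k` for `j a_k` copies of `a_1`, `j < t`, gives `t`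
distinct representations.
-/

open Finset

open Pointwise

section Representations

variable {A : Finset ℤ} {h : ℕ} {n : ℤ}

lemma sumsetT_subset_Icc {M : ℤ} (hA : ∀ x ∈ A, 0 ≤ x ∧ x ≤ M) {t : ℕ} (ht : 0 < t) :
    sumsetT A h t ⊆ Set.Icc 0 (h * M) := by
  intro n hn
  obtain ⟨s, hs, rfl⟩ : ∃ s ∈ A.sym h, (s : Multiset ℤ).sum = n := by
    by_contra! hnone
    have : repCount A h n = 0 := card_eq_zero.mpr (filter_eq_empty_iff.mpr hnone)
    exact (ht.trans_le hn).ne' this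
  have hsA : ∀ x ∈ (s : Multiset ℤ), 0 ≤ x ∧ x ≤ M := fun x hx => hA x (mem_sym_iff.mp hs x hx)
  refine ⟨Multiset.sum_nonneg fun x hx => (hsA x hx).1, ?_⟩
  simpa using Multiset.sum_le_card_nsmul _ M fun x hx => (hsA x hx).2

lemma repCount_succ_of_le (h0 : 0 ∈ A) (hA : ∀ x ∈ A, 0 ≤ x) (hn : n ≤ h) :
    repCount A (h + 1) n = repCount A h n := by
  classical
  symm
  refine card_bij (fun s _ => 0 ::ₛ s) ?_ (fun s _ s' _ => (Sym.cons_inj_right 0 s s').mp) ?_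
  · intro s hs
    simp only [mem_filter, mem_sym_iff, Sym.mem_cons, Sym.coe_cons, Multiset.sum_cons,
      zero_add] at hs ⊢
    exact ⟨fun x hx => hx.elim (· ▸ h0) (hs.1 x), hs.2⟩
  · intro s hs
    simp only [mem_filter, mem_sym_iff] at hs
    -- a representation of `n ≤ h` by `h + 1` nonnegative terms must use `0`
    have hs0 : (0 : ℤ) ∈ s := by
      by_contra hs0
      have hs1 : ∀ x ∈ (s : Multiset ℤ), 1 ≤ x := fun x hx =>
        lt_of_le_of_ne (hA x (hs.1 x hx)) (fun h => hs0 (h ▸ hx))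
      have := Multiset.card_nsmul_le_sum hs1
      simp only [Sym.card_coe, nsmul_eq_mul, mul_one, hs.2] at this
      omega
    refine ⟨s.erase 0 hs0, ?_, Sym.cons_erase hs0⟩
    rw [← Sym.cons_erase hs0] at hs
    simp only [mem_filter, mem_sym_iff, Sym.mem_cons, Sym.coe_cons, Multiset.sum_cons,
      zero_add] at hs ⊢
    exact ⟨fun x hx => hs.1 x (Or.inr hx), hs.2⟩

lemma repCount_eq_of_le (h0 : 0 ∈ A) (hA : ∀ x ∈ A, 0 ≤ x) {h₁ h₂ : ℕ} (hn : n ≤ h₁)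
    (h₁₂ : h₁ ≤ h₂) : repCount A h₂ n = repCount A h₁ n := by
  induction h₂, h₁₂ using Nat.le_induction with
  | base => rfl
  | succ h hh ih => rw [repCount_succ_of_le h0 hA (hn.trans (by exact_mod_cast hh)), ih]

lemma mem_sumsetT_iff_of_le (h0 : 0 ∈ A) (hA : ∀ x ∈ A, 0 ≤ x) {h₁ h₂ t : ℕ} (hn : n ≤ h₁)
    (h₁₂ : h₁ ≤ h₂) : n ∈ sumsetT A h₂ t ↔ n ∈ sumsetT A h₁ t := by
  simp only [sumsetT, Set.mem_ofPred_eq, repCount_eq_of_le h0 hA hn h₁₂]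

lemma repCount_image_sub (M : ℤ) :
    repCount (A.image (M - ·)) h (h * M - n) = repCount A h n := by
  classical
  have hinv : ∀ s : Sym ℤ h, (s.map (M - ·)).map (M - ·) = s := fun s => by
    simp [Sym.map_map]
  refine card_nbij' (Sym.map (M - ·)) (Sym.map (M - ·)) ?_ ?_ (fun s _ => hinv s)
    (fun s _ => hinv s)
  · intro s hs
    simp only [coe_filter, Set.mem_ofPred_eq, mem_sym_iff, Sym.mem_map, mem_image] at hs ⊢
    refine ⟨?_, ?_⟩
    · rintro x ⟨y, hy, rfl⟩
      obtain ⟨z, hz, rfl⟩ := hs.1 y hy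
      simpa using hz
    · rw [Sym.coe_map, Multiset.sum_map_sub]
      simp [hs.2]
  · intro s hs
    simp only [coe_filter, Set.mem_ofPred_eq, mem_sym_iff, Sym.mem_map, mem_image] at hs ⊢
    refine ⟨fun x ⟨y, hy, hyx⟩ => ⟨y, hs.1 y hy, hyx⟩, ?_⟩
    rw [Sym.coe_map, Multiset.sum_map_sub]
    simp [hs.2]

lemma mem_sumsetT_image_sub_iff {t : ℕ} (M : ℤ) :
    n ∈ sumsetT (A.image (M - ·)) h t ↔ h * M - n ∈ sumsetT A h t := by
  simp only [sumsetT, Set.mem_ofPred_eq, ← repCount_image_sub M (n := h * M - n), sub_sub_cancel]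

lemma le_repCount_of_inj_on_range {t : ℕ} (F : ℕ → Multiset ℤ)
    (hF : ∀ j < t, (∀ x ∈ F j, x ∈ A) ∧ Multiset.card (F j) = h ∧ (F j).sum = n)
    (hinj : ∀ i < t, ∀ j < t, F i = F j → i = j) : t ≤ repCount A h n := by
  classical
  rw [repCount, ← card_map ⟨Sym.toMultiset, Sym.coe_injective⟩]
  refine le_card_of_inj_on_range F (fun j hj => ?_) hinj
  obtain ⟨hA, hcard, hsum⟩ := hF j hj
  exact mem_map.mpr ⟨⟨F j, hcard⟩, mem_filter.mpr ⟨mem_sym_iff.mpr hA, hsum⟩, rfl⟩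

end Representations

lemma Finset.nsmul_card_sub_one_eq_univ {G : Type*} [AddGroup G] [Fintype G] [DecidableEq G]
    {X : Finset G} (h0 : 0 ∈ X) (hX : AddSubgroup.closure (X : Set G) = ⊤) :
    (Fintype.card G - 1) • X = univ := by
  obtain rfl | hXnt := eq_singleton_or_nontrivial h0
  · refine eq_univ_of_forall fun z => ?_
    have hz : z ∈ (⊤ : AddSubgroup G) := trivial
    rw [← hX, coe_singleton, AddSubgroup.closure_singleton_zero, AddSubgroup.mem_bot] at hz
    rw [hz]
    exact zero_mem_nsmul h0
  -- the sumsets `n • X` grow strictly until they fill the group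
  have growth : ∀ n : ℕ, n • X = univ ∨ n + 1 ≤ #(n • X) := by
    intro n
    induction n with
    | zero => simp
    | succ n ih =>
      by_cases hn : (n • X : Set G) = AddSubgroup.closure (X : Set G)
      · rw [hX, AddSubgroup.coe_top, ← coe_nsmul, coe_eq_univ] at hn
        exact .inl (eq_univ_of_forall fun z =>
          nsmul_subset_nsmul_right h0 n.le_succ (hn ▸ mem_univ z))
      · refine ih.imp (fun h => ?_) fun h => h.trans_lt
          (card_lt_card (nsmul_ssubset_nsmul_succ_of_nsmul_ne_closure h0 hXnt hn))
        exact absurd (by rw [← coe_nsmul, h, hX]; simp) hn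
  refine (growth _).elim id fun h => eq_univ_of_card _ (le_antisymm (card_le_univ _) ?_)
  have : 0 < Fintype.card G := Fintype.card_pos_iff.mpr ⟨0⟩
  omega

lemma exists_multiset_of_mem_nsmul_image {α β : Type*} [AddCommMonoid α] [AddCommMonoid β]
    [DecidableEq β] (f : α →+ β) {s : Finset α} {n : ℕ} {b : β} (hb : b ∈ n • s.image f) :
    ∃ w : Multiset α, (∀ x ∈ w, x ∈ s) ∧ Multiset.card w = n ∧ f w.sum = b := by
  induction n generalizing b with
  | zero => exact ⟨0, by simp, rfl, by simp_all⟩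
  | succ n ih =>
    rw [succ_nsmul] at hb
    obtain ⟨b', hb', y, hy, rfl⟩ := mem_add.mp hb
    obtain ⟨x, hx, rfl⟩ := mem_image.mp hy
    obtain ⟨w, hws, hwcard, rfl⟩ := ih hb'
    refine ⟨x ::ₘ w, ?_, by simp [hwcard], by simp [add_comm]⟩
    simpa using ⟨hx, hws⟩

lemma closure_image_intCast_eq_top {A : Finset ℤ} (hgcd : A.gcd id = 1) (m : ℕ) :
    AddSubgroup.closure (A.image (Int.cast : ℤ → ZMod m) : Set (ZMod m)) = ⊤ := by
  classical
  set H := AddSubgroup.closure (A.image (Int.cast : ℤ → ZMod m) : Set (ZMod m))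
  obtain ⟨g, hg⟩ := A.gcd_eq_sum_mul id
  have h1 : (1 : ZMod m) ∈ H := by
    have : ((1 : ℤ) : ZMod m) = ∑ x ∈ A, g x • (x : ZMod m) := by
      simp [← hgcd, hg, zsmul_eq_mul, mul_comm]
    rw [Int.cast_one] at this
    rw [this]
    exact H.sum_mem fun x hx => H.zsmul_mem (AddSubgroup.subset_closure (mem_image_of_mem _ hx)) _
  refine eq_top_iff.mpr fun z _ => ?_
  simpa using H.zsmul_mem h1 z.cast

lemma exists_multiset_card_sub_one_sum_modEq {A : Finset ℤ} (h0 : 0 ∈ A) (hgcd : A.gcd id = 1)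
    (m : ℕ) [NeZero m] (n : ℤ) :
    ∃ w : Multiset ℤ, (∀ x ∈ w, x ∈ A) ∧ Multiset.card w = m - 1 ∧ w.sum ≡ n [ZMOD m] := by
  classical
  have hX := nsmul_card_sub_one_eq_univ (mem_image.mpr ⟨0, h0, Int.cast_zero⟩)
    (closure_image_intCast_eq_top hgcd m)
  rw [ZMod.card] at hX
  obtain ⟨w, hwA, hwcard, hw⟩ :=
    exists_multiset_of_mem_nsmul_image (Int.castAddHom (ZMod m)) (hX ▸ mem_univ (n : ZMod m))
  exact ⟨w, hwA, hwcard, (ZMod.intCast_eq_intCast_iff _ _ _).mp (by simpa using hw)⟩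

section Decomposition

variable {A : Finset ℤ} {h t : ℕ}

lemma le_repCount_sum_add_mul (h0 : 0 ∈ A) {a M : ℕ} (ha : (a : ℤ) ∈ A) (hM : (M : ℤ) ∈ A)
    (ha0 : 0 < a) (haM : a < M) {w : Multiset ℤ} (hw : ∀ x ∈ w, x ∈ A) {Q : ℕ}
    (hQ : (t - 1) * a ≤ Q) (hh : Multiset.card w + Q + (t - 1) * M ≤ h) :
    t ≤ repCount A h (w.sum + Q * M) := by
  -- the `j`-th representation trades `j * a` copies of `M` for `j * M` copies of `a`
  set base : ℕ → Multiset ℤ := fun j =>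
    w + Multiset.replicate (Q - j * a) (M : ℤ) + Multiset.replicate (j * M) (a : ℤ)
  set F : ℕ → Multiset ℤ := fun j => base j + Multiset.replicate (h - Multiset.card (base j)) 0
  have hcount : ∀ j, (F j).count (a : ℤ) = w.count (a : ℤ) + j * M := fun j => by
    have ha0' : (0 : ℤ) ≠ a := by exact_mod_cast ha0.ne
    simp [F, base, Multiset.count_replicate, haM.ne', ha0']
  refine le_repCount_of_inj_on_range F (fun j hj => ?_) fun i _ j _ hij => ?_
  · have hjt : j ≤ t - 1 := by omega
    have hja : j * a ≤ Q := (Nat.mul_le_mul_right a hjt).trans hQ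
    have hjM : j * M ≤ (t - 1) * M := Nat.mul_le_mul_right M hjt
    refine ⟨?_, ?_, ?_⟩
    · simp only [F, base, Multiset.mem_add, Multiset.mem_replicate]
      rintro x (((hx | ⟨-, rfl⟩) | ⟨-, rfl⟩) | ⟨-, rfl⟩) <;> first | exact hw x hx | assumption
    · simp only [F, base, Multiset.card_add, Multiset.card_replicate]
      omega
    · simp [F, base, Multiset.sum_replicate, Nat.cast_sub hja]
      ring
  · have := congrArg (Multiset.count (a : ℤ)) hij
    rw [hcount, hcount] at this
    exact Nat.eq_of_mul_eq_mul_right (ha0.trans haM) (by omega)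

lemma le_repCount_of_mem_Icc {a M : ℤ} (hA : ∀ x ∈ A, 0 ≤ x ∧ x ≤ M) (h0 : 0 ∈ A)
    (ha : a ∈ A) (hM : M ∈ A) (ha0 : 0 < a) (haM : a < M) (hgcd : A.gcd id = 1) {n : ℤ}
    (hn : n ∈ Set.Icc ((t * M - 1) * M) (h * M - (t * M - 1) * M)) :
    t ≤ repCount A h n := by
  obtain ⟨hlo, hhi⟩ := hn
  rcases Nat.eq_zero_or_pos t with rfl | ht
  · exact Nat.zero_le _
  lift M to ℕ using by omega
  lift a to ℕ using ha0.le
  have : NeZero M := ⟨by omega⟩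
  obtain ⟨w, hwA, hwcard, hwn⟩ := exists_multiset_card_sub_one_sum_modEq h0 hgcd M n
  obtain ⟨q, hq⟩ := hwn.dvd
  have hw0 : 0 ≤ w.sum := Multiset.sum_nonneg fun x hx => (hA x (hwA x hx)).1
  have hwM : w.sum ≤ ((M - 1 : ℕ) : ℤ) * M := by
    simpa [hwcard] using Multiset.sum_le_card_nsmul w _ fun x hx => (hA x (hwA x hx)).2
  have hM1 : ((M - 1 : ℕ) : ℤ) = M - 1 := by omega
  have ht1 : ((t - 1 : ℕ) : ℤ) = t - 1 := by omega
  rw [hM1] at hwM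
  have hqlo : ((t : ℤ) - 1) * M ≤ q := by nlinarith
  have hqhi : q ≤ h - t * M + 1 := by nlinarith
  lift q to ℕ using by nlinarith
  have key := le_repCount_sum_add_mul h0 ha hM (by exact_mod_cast ha0) (by exact_mod_cast haM) hwA
    (t := t) (h := h) (Q := q) (by zify [ht1]; nlinarith) (by zify [hwcard, hM1, ht1]; nlinarith)
  rwa [show w.sum + q * M = n by linarith] at key

end Decomposition

section Shape

variable {P Q : ℤ → Prop}

lemma exists_threshold {w : ℤ} (hw0 : 0 ≤ w) (hw : P w) (hneg : ¬ P (-1)) :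
    ∃ c, 0 ≤ c ∧ c ≤ w ∧ (∀ n, c ≤ n → n ≤ w → P n) ∧ ¬ P (c - 1) := by
  obtain ⟨b, ⟨hbw, hb⟩, hmax⟩ := Int.exists_greatest_of_bdd (P := fun n => n ≤ w ∧ ¬ P n)
    ⟨w, fun _ h => h.1⟩ ⟨-1, by omega, hneg⟩
  have hbw' : b ≠ w := fun h => hb (h ▸ hw)
  refine ⟨b + 1, by linarith [hmax (-1) ⟨by omega, hneg⟩], by omega, fun n hbn hnw => ?_,
    by simpa using hb⟩
  by_contra hn
  linarith [hmax n ⟨hnw, hn⟩]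

lemma eq_union_of_windows [DecidablePred P] [DecidablePred Q] {S : Set ℤ} {L w c d : ℤ}
    (hS : S ⊆ Set.Icc 0 L)
    (hlow : ∀ n, 0 ≤ n → n ≤ w → (n ∈ S ↔ P n))
    (hhigh : ∀ n, 0 ≤ n → n ≤ w → (L - n ∈ S ↔ Q n))
    (hmid : Set.Icc w (L - w) ⊆ S)
    (hc0 : 0 ≤ c) (hcw : c ≤ w) (hP : ∀ n, c ≤ n → n ≤ w → P n) (hPc : ¬ P (c - 1))
    (hd0 : 0 ≤ d) (hdw : d ≤ w) (hQ : ∀ n, d ≤ n → n ≤ w → Q n) (hQd : ¬ Q (d - 1)) :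
    S = ↑((Icc 0 (c - 2)).filter P) ∪ Set.Icc c (L - d) ∪
      ((fun x => L - x) '' ↑((Icc 0 (d - 2)).filter Q)) := by
  ext n
  simp only [Set.mem_union, coe_filter, mem_Icc, Set.mem_ofPred_eq, Set.mem_Icc, Set.mem_image]
  constructor
  · intro hn
    obtain ⟨hn0, hnL⟩ := hS hn
    rcases lt_or_ge n c with hnc | hcn
    · have hPn := (hlow n hn0 (by omega)).mp hn
      have : n ≠ c - 1 := fun h => hPc (h ▸ hPn)
      exact .inl (.inl ⟨⟨hn0, by omega⟩, hPn⟩)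
    rcases le_or_gt n (L - d) with hnd | hdn
    · exact .inl (.inr ⟨hcn, hnd⟩)
    have hQn := (hhigh (L - n) (by omega) (by omega)).mp (by rwa [sub_sub_cancel])
    have : L - n ≠ d - 1 := fun h => hQd (h ▸ hQn)
    exact .inr ⟨L - n, ⟨⟨by omega, by omega⟩, hQn⟩, sub_sub_cancel L n⟩
  · rintro ((⟨⟨hn0, hnc⟩, hPn⟩ | ⟨hcn, hnd⟩) | ⟨m, ⟨⟨hm0, hmd⟩, hQm⟩, rfl⟩)
    · exact (hlow n hn0 (by omega)).mpr hPn
    · rcases le_or_gt n w with hnw | hwn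
      · exact (hlow n (by omega) hnw).mpr (hP n hcn hnw)
      rcases le_or_gt n (L - w) with hnw' | hwn'
      · exact hmid ⟨hwn.le, hnw'⟩
      simpa using (hhigh (L - n) (by omega) (by omega)).mpr (hQ _ (by omega) (by omega))
    · exact (hhigh m hm0 (by omega)).mpr hQm

end Shape

theorem sumsetT_eq_union_Icc {A : Finset ℤ} {a M : ℤ} (hA : ∀ x ∈ A, 0 ≤ x ∧ x ≤ M)
    (h0 : 0 ∈ A) (ha : a ∈ A) (hM : M ∈ A) (ha0 : 0 < a) (haM : a < M) (hgcd : A.gcd id = 1)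
    {t : ℕ} (ht : 0 < t) :
    ∃ c d : ℤ, 0 ≤ c ∧ 0 ≤ d ∧ ∃ C D : Finset ℤ,
      ↑C ⊆ Set.Icc (0 : ℤ) (c - 2) ∧ ↑D ⊆ Set.Icc (0 : ℤ) (d - 2) ∧
      ∀ h : ℕ, (t * M - 1) * M ≤ h →
        sumsetT A h t = ↑C ∪ Set.Icc c (h * M - d) ∪ ((fun x => h * M - x) '' ↑D) := by
  classical
  set B := A.image (M - ·)
  have hB : ∀ x ∈ B, 0 ≤ x ∧ x ≤ M := by
    rintro _ hx
    obtain ⟨y, hy, rfl⟩ := mem_image.mp hx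
    have := hA y hy
    omega
  have h0B : (0 : ℤ) ∈ B := mem_image.mpr ⟨M, hM, sub_self M⟩
  set w := (t * M - 1) * M
  have hw0 : 0 ≤ w := mul_nonneg (by nlinarith) (by omega)
  have hmid : ∀ h : ℕ, Set.Icc w (h * M - w) ⊆ sumsetT A h t := fun h n hn =>
    le_repCount_of_mem_Icc hA h0 ha hM ha0 haM hgcd hn
  set W := w.toNat
  have hWw : (W : ℤ) = w := Int.toNat_of_nonneg hw0
  have hwW : w ≤ W * M - w := by nlinarith
  obtain ⟨c, hc0, hcw, hcP, hcP'⟩ := exists_threshold (P := (· ∈ sumsetT A W t)) hw0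
    (hmid W ⟨le_rfl, hwW⟩) fun hmem => absurd (sumsetT_subset_Icc hA ht hmem).1 (by norm_num)
  obtain ⟨d, hd0, hdw, hdQ, hdQ'⟩ := exists_threshold (P := (· ∈ sumsetT B W t)) hw0
    ((mem_sumsetT_image_sub_iff M).mpr (hmid W ⟨hwW, by omega⟩))
    fun hmem => absurd (sumsetT_subset_Icc hB ht hmem).1 (by norm_num)
  refine ⟨c, d, hc0, hd0, (Icc 0 (c - 2)).filter (· ∈ sumsetT A W t),
    (Icc 0 (d - 2)).filter (· ∈ sumsetT B W t), ?_, ?_, fun h hh => ?_⟩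
  · rw [← coe_Icc]; exact coe_subset.mpr (filter_subset _ _)
  · rw [← coe_Icc]; exact coe_subset.mpr (filter_subset _ _)
  have hWh : W ≤ h := by omega
  refine eq_union_of_windows (sumsetT_subset_Icc hA ht) (fun n _ hnw => ?_) (fun n _ hnw => ?_)
    (hmid h) hc0 hcw hcP hcP' hd0 hdw hdQ hdQ'
  · exact mem_sumsetT_iff_of_le h0 (fun x hx => (hA x hx).1) (by omega) hWh
  · exact (mem_sumsetT_image_sub_iff M).symm.trans
      (mem_sumsetT_iff_of_le h0B (fun x hx => (hB x hx).1) (by omega) hWh)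

theorem stmt2 (k : ℕ) (hk : 2 ≤ k) (a : ℕ → ℤ)
    (ha0 : a 0 = 0) (hmono : ∀ i j, i ≤ k → j ≤ k → i < j → a i < a j)
    (A : Finset ℤ) (hA : A = (Finset.range (k + 1)).image a)
    (hgcd : A.gcd id = 1)
    (t : ℕ) (ht : 0 < t)
    (h_t : ℕ) (hh_t : (h_t : ℤ) = ((k : ℤ) - 1) * ((t : ℤ) * a k - 1) * a k + 1) :
    ∃ c d : ℤ, 0 ≤ c ∧ 0 ≤ d ∧ ∃ C D : Finset ℤ,
      ↑C ⊆ Set.Icc (0 : ℤ) (c - 2) ∧ ↑D ⊆ Set.Icc (0 : ℤ) (d - 2) ∧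
      ∀ h : ℕ, h_t ≤ h →
        sumsetT A h t =
          ↑C ∪ Set.Icc c ((h : ℤ) * a k - d) ∪ ((fun x => (h : ℤ) * a k - x) '' ↑D) := by
  have hmemA : ∀ i ≤ k, a i ∈ A := fun i hi => hA ▸ mem_image_of_mem a (mem_range.mpr (by omega))
  have hAk : ∀ x ∈ A, 0 ≤ x ∧ x ≤ a k := by
    have hsm : MonotoneOn a (Set.Iic k) := StrictMonoOn.monotoneOn fun i hi j hj => hmono i j hi hj
    rw [hA]
    rintro _ hx
    obtain ⟨i, hi, rfl⟩ := mem_image.mp hx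
    have hik : i ≤ k := Nat.lt_succ_iff.mp (mem_range.mp hi)
    exact ⟨ha0 ▸ hsm (Nat.zero_le k) hik (Nat.zero_le i), hsm hik Set.self_mem_Iic hik⟩
  have ha1 : 0 < a 1 := ha0 ▸ hmono 0 1 (by omega) (by omega) one_pos
  have ha1k : a 1 < a k := hmono 1 k (by omega) le_rfl (by omega)
  obtain ⟨c, d, hc0, hd0, C, D, hC, hD, hshape⟩ := sumsetT_eq_union_Icc hAk
    (ha0 ▸ hmemA 0 (Nat.zero_le k)) (hmemA 1 (by omega)) (hmemA k le_rfl) ha1 ha1k hgcd ht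
  refine ⟨c, d, hc0, hd0, C, D, hC, hD, fun h hh => hshape h ?_⟩
  have ht1 : (1 : ℤ) ≤ t := by exact_mod_cast ht
  have hw0 : 0 ≤ ((t : ℤ) * a k - 1) * a k := mul_nonneg (by nlinarith) (ha1.trans ha1k).le
  have : (h_t : ℤ) ≤ h := by exact_mod_cast hh
  nlinarith
end

section
/- Let k ≥ 2 and A = {a_0, ..., a_k} with 0 = a_0 < a_1 < ... < a_k and gcd(A) = 1. For every positive integer t and every integer n ≥ (t·a_k − 1)·(a_1 + ... + a_{k−1}), there exist t distinct k-tuples (x_1, ..., x_k) of nonnegative integers with n = x_1·a_1 + ... + x_k·a_k; i.e., n has at least t distinct representations as a nonnegative integer linear combination of a_1, ..., a_k. -/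
/-!
Bézout gives an integer representation `n = ∑ c_j a_j`. Reducing `c_1, …, c_{k-1}` modulo `a_k`
and moving the quotients onto the last coefficient gives a representation with `0 ≤ x_j < a_k`
for `j < k`; the bound on `n` then forces `x_k ≥ (t - 1)(a_1 + ⋯ + a_{k-1}) ≥ (t - 1) a_1`.
Trading `a_1` copies of `a_k` for `a_k` copies of `a_1`, up to `t - 1` times, keeps every
coefficient nonnegative and yields `t` distinct representations.
-/

open Finset

section Weights

variable {ι : Type*} [Fintype ι] [DecidableEq ι]

/-- Adding `exchange w p q` to a coefficient vector trades `w p` copies of `w q` for `w q` copies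
of `w p`. -/
def exchange (w : ι → ℤ) (p q : ι) : ι → ℤ := Pi.single p (w q) - Pi.single q (w p)

lemma sum_exchange_mul (w : ι → ℤ) (p q : ι) : ∑ j, exchange w p q j * w j = 0 := by
  simp only [exchange, Pi.sub_apply, sub_mul, sum_sub_distrib]
  simp [Pi.single_apply, mul_comm]

lemma sum_add_smul_exchange_mul (x w : ι → ℤ) (p q : ι) (i : ℤ) :
    ∑ j, (x + i • exchange w p q) j * w j = ∑ j, x j * w j := by
  simp only [Pi.add_apply, Pi.smul_apply, smul_eq_mul, add_mul, mul_assoc, sum_add_distrib,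
    ← mul_sum, sum_exchange_mul, mul_zero, add_zero]

lemma exists_card_eq_of_exchange (w : ι → ℤ) {p q : ι} (hpq : p ≠ q) (hq : 0 < w q)
    (x : ι → ℤ) (hx : ∀ j ≠ q, 0 ≤ x j) (t : ℕ) (hxq : ∀ i < t, (i : ℤ) * w p ≤ x q) :
    ∃ S : Finset (ι → ℕ), S.card = t ∧ ∀ v ∈ S, ∑ j, (v j : ℤ) * w j = ∑ j, x j * w j := by
  set v : ℕ → ι → ℤ := fun i => x + (i : ℤ) • exchange w p q
  have hv_p (i : ℕ) : v i p = x p + i * w q := by simp [v, exchange, hpq]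
  have hv_nonneg (i : ℕ) (hi : i < t) (j : ι) : 0 ≤ v i j := by
    by_cases hjq : j = q
    · subst hjq
      simpa [v, exchange, hpq.symm] using hxq i hi
    by_cases hjp : j = p
    · subst hjp
      rw [hv_p]
      have := hx j hjq
      positivity
    simpa [v, exchange, hjp, hjq] using hx j hjq
  refine ⟨(range t).image fun i j => (v i j).toNat, ?_, ?_⟩
  · rw [card_image_of_injOn, card_range]
    intro i hi i' hi' h
    simp only [coe_range, Set.mem_Iio] at hi hi'
    have hp : v i p = v i' p := by
      have := congrFun h p
      simp only at this
      have := hv_nonneg i hi p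
      have := hv_nonneg i' hi' p
      omega
    rw [hv_p, hv_p] at hp
    exact_mod_cast mul_right_cancel₀ hq.ne' (add_left_cancel hp)
  · simp only [mem_image, mem_range]
    rintro _ ⟨i, hi, rfl⟩
    simp only [Int.toNat_of_nonneg (hv_nonneg i hi _)]
    exact sum_add_smul_exchange_mul x w p q i

lemma exists_sum_mul_eq_and_coeff_lt (w : ι → ℤ) {q : ι} (hq : 0 < w q) (c : ι → ℤ) :
    ∃ x : ι → ℤ, ∑ j, x j * w j = ∑ j, c j * w j ∧ ∀ j ≠ q, 0 ≤ x j ∧ x j < w q := by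
  refine ⟨(fun j => c j % w q) + Pi.single q (∑ j, c j / w q * w j), ?_, fun j hj => ?_⟩
  · calc ∑ j, ((fun j => c j % w q) + Pi.single q (∑ j, c j / w q * w j) : ι → ℤ) j * w j
        = ∑ j, c j % w q * w j + (∑ j, c j / w q * w j) * w q := by
          simp [add_mul, sum_add_distrib, Pi.single_apply]
      _ = ∑ j, (c j % w q * w j + c j / w q * w j * w q) := by rw [sum_mul, sum_add_distrib]
      _ = ∑ j, c j * w j := sum_congr rfl fun j _ => by
          linear_combination w j * Int.emod_add_mul_ediv (c j) (w q)
  · simpa [hj] using ⟨Int.emod_nonneg _ hq.ne', Int.emod_lt_of_pos _ hq⟩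

lemma sub_one_mul_sum_erase_le_of_sum_mul_eq {w : ι → ℤ} (hw : ∀ j, 0 ≤ w j) {q : ι}
    (hq : 0 < w q) {x : ι → ℤ} (hx : ∀ j ≠ q, x j < w q) {t n : ℤ}
    (hn : (t * w q - 1) * ∑ j ∈ univ.erase q, w j ≤ n) (hxn : ∑ j, x j * w j = n) :
    (t - 1) * ∑ j ∈ univ.erase q, w j ≤ x q := by
  have hrest : ∑ j ∈ univ.erase q, x j * w j ≤ (w q - 1) * ∑ j ∈ univ.erase q, w j := by
    rw [mul_sum]
    refine sum_le_sum fun j hj => mul_le_mul_of_nonneg_right ?_ (hw j)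
    linarith [hx j (ne_of_mem_erase hj)]
  rw [← sum_erase_add _ _ (mem_univ q)] at hxn
  refine le_of_mul_le_mul_right ?_ hq
  linarith

theorem exists_card_eq_sum_mul_eq {w : ι → ℤ} (hw : ∀ j, 0 ≤ w j) {p q : ι} (hpq : p ≠ q)
    (hq : 0 < w q) {c : ι → ℤ} {t : ℕ}
    (hn : ((t : ℤ) * w q - 1) * ∑ j ∈ univ.erase q, w j ≤ ∑ j, c j * w j) :
    ∃ S : Finset (ι → ℕ), S.card = t ∧ ∀ v ∈ S, ∑ j, (v j : ℤ) * w j = ∑ j, c j * w j := by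
  obtain ⟨x, hxc, hx⟩ := exists_sum_mul_eq_and_coeff_lt w hq c
  have hxq := sub_one_mul_sum_erase_le_of_sum_mul_eq hw hq (fun j hj => (hx j hj).2) hn hxc
  rw [← hxc]
  refine exists_card_eq_of_exchange w hpq hq x (fun j hj => (hx j hj).1) t fun i hi => ?_
  have hs : 0 ≤ ∑ j ∈ univ.erase q, w j := sum_nonneg fun j _ => hw j
  calc (i : ℤ) * w p ≤ i * ∑ j ∈ univ.erase q, w j :=
        mul_le_mul_of_nonneg_left (single_le_sum (fun j _ => hw j) (mem_erase.2 ⟨hpq, mem_univ p⟩))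
          (Int.natCast_nonneg i)
    _ ≤ (t - 1) * ∑ j ∈ univ.erase q, w j := mul_le_mul_of_nonneg_right (by omega) hs
    _ ≤ x q := hxq

end Weights

lemma exists_sum_mul_eq_of_gcd_eq_one {k : ℕ} {a : ℕ → ℤ} (ha0 : a 0 = 0)
    (hgcd : ((range (k + 1)).image a).gcd id = 1) (n : ℤ) :
    ∃ c : Fin k → ℤ, ∑ j : Fin k, c j * a (j + 1) = n := by
  obtain ⟨g, hg⟩ := (range (k + 1)).gcd_eq_sum_mul a
  rw [gcd_image, Function.id_comp] at hgcd
  rw [hgcd, sum_range_succ', ha0, zero_mul, add_zero] at hg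
  refine ⟨fun j => n * g (j + 1), ?_⟩
  calc ∑ j : Fin k, n * g (j + 1) * a (j + 1)
      = ∑ j ∈ range k, n * g (j + 1) * a (j + 1) :=
        Fin.sum_univ_eq_sum_range (fun j => n * g (j + 1) * a (j + 1)) k
    _ = n * ∑ j ∈ range k, a (j + 1) * g (j + 1) := by
      rw [mul_sum]; exact sum_congr rfl fun _ _ => by ring
    _ = n := by rw [← hg, mul_one]

lemma sum_erase_last_eq_sum_Icc (m : ℕ) (f : ℕ → ℤ) :
    ∑ j ∈ univ.erase (Fin.last m), f (j + 1) = ∑ j ∈ Icc 1 m, f j := by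
  rw [sum_erase_eq_sub (mem_univ _), Fin.sum_univ_eq_sum_range (fun j => f (j + 1)),
    sum_range_succ, Fin.val_last, add_sub_cancel_right, range_eq_Ico, sum_Ico_add' f 0 m 1]
  rfl

theorem stmt8_general (k : ℕ) (hk : 2 ≤ k) (a : ℕ → ℤ)
    (ha0 : a 0 = 0) (hmono : ∀ i j, i ≤ k → j ≤ k → i < j → a i < a j)
    (hgcd : ((Finset.range (k + 1)).image a).gcd id = 1)
    (t : ℕ)
    (n : ℤ) (hn : ((t : ℤ) * a k - 1) * ∑ j ∈ Finset.Icc 1 (k - 1), a j ≤ n) :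
    ∃ S : Finset (Fin k → ℕ), S.card = t ∧
      ∀ x ∈ S, ∑ j : Fin k, (x j : ℤ) * a (j.val + 1) = n := by
  obtain ⟨m, rfl⟩ : ∃ m, k = m + 1 := ⟨k - 1, by omega⟩
  have hpos (j : Fin (m + 1)) : 0 < a (j + 1) :=
    ha0 ▸ hmono 0 (j + 1) (by omega) (by omega) (by omega)
  obtain ⟨c, rfl⟩ := exists_sum_mul_eq_of_gcd_eq_one ha0 hgcd n
  rw [add_tsub_cancel_right, ← sum_erase_last_eq_sum_Icc] at hn
  have hpq : (0 : Fin (m + 1)) ≠ Fin.last m := by simp [Fin.ext_iff]; omega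
  exact exists_card_eq_sum_mul_eq (fun j => (hpos j).le) hpq (hpos _) hn

theorem stmt8 (k : ℕ) (hk : 2 ≤ k) (a : ℕ → ℤ)
    (ha0 : a 0 = 0) (hmono : ∀ i j, i ≤ k → j ≤ k → i < j → a i < a j)
    (hgcd : ((Finset.range (k + 1)).image a).gcd id = 1)
    (t : ℕ) (ht : 0 < t)
    (n : ℤ) (hn : ((t : ℤ) * a k - 1) * ∑ j ∈ Finset.Icc 1 (k - 1), a j ≤ n) :
    ∃ S : Finset (Fin k → ℕ), S.card = t ∧
      ∀ x ∈ S, ∑ j : Fin k, (x j : ℤ) * a (j.val + 1) = n :=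
  stmt8_general k hk a ha0 hmono hgcd t n hn
end

section
/- Let A be a finite set of integers with min(A) = 0, max(A) = a_k > 0, and gcd(A) = 1. Suppose for some h that (hA)^{(t)} ⊇ [c, h·a_k − d] where c, d are nonnegative integers with c + d ≤ a_k·(h−1). Then (h+1)A)^{(t)} ⊇ [c, (h+1)·a_k − d]. -/
open Finset

/-! Adjoining a summand `x ∈ A` injects the `h`-fold representations of `n` into the
`(h+1)`-fold representations of `n + x`. Taking `x = 0` and `x = a_k` covers
`[c, h a_k - d]` and `[c + a_k, (h+1) a_k - d]`, and these two intervals leave no gap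
because `c + d ≤ a_k (h - 1)`. -/

lemma repCount_le_repCount_succ_add {A : Finset ℤ} {x : ℤ} (hx : x ∈ A) (h : ℕ) (n : ℤ) :
    repCount A h n ≤ repCount A (h + 1) (n + x) := by
  refine card_le_card_of_injOn (x ::ₛ ·) (fun m hm => ?_)
    (fun m₁ _ m₂ _ heq => (Sym.cons_inj_right x m₁ m₂).mp heq)
  simp only [coe_filter, Set.mem_ofPred_eq, mem_sym_iff] at hm ⊢
  refine ⟨fun a ha => ?_, ?_⟩
  · rcases Sym.mem_cons.mp ha with rfl | ha
    exacts [hx, hm.1 a ha]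
  · rw [Sym.coe_cons, Multiset.sum_cons, hm.2, add_comm]

lemma add_mem_sumsetT_succ {A : Finset ℤ} {x : ℤ} (hx : x ∈ A) {h t : ℕ} {n : ℤ}
    (hn : n ∈ sumsetT A h t) : n + x ∈ sumsetT A (h + 1) t :=
  le_trans hn (repCount_le_repCount_succ_add hx h n)

theorem stmt10_general (A : Finset ℤ) (hne : A.Nonempty)
    (hmin : A.min' hne = 0) (ak : ℤ) (hak : ak = A.max' hne)
    (h t : ℕ)
    (c d : ℤ) (hcd : c + d ≤ ak * ((h : ℤ) - 1))
    (hsub : Set.Icc c ((h : ℤ) * ak - d) ⊆ sumsetT A h t) :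
    Set.Icc c (((h : ℤ) + 1) * ak - d) ⊆ sumsetT A (h + 1) t := by
  have h0 : (0 : ℤ) ∈ A := hmin ▸ A.min'_mem hne
  have hakA : ak ∈ A := hak ▸ A.max'_mem hne
  rintro n ⟨hcn, hnd⟩
  by_cases hlow : n ≤ (h : ℤ) * ak - d
  · simpa using add_mem_sumsetT_succ h0 (hsub ⟨hcn, hlow⟩)
  · have hshift : n - ak ∈ Set.Icc c ((h : ℤ) * ak - d) := ⟨by linarith, by linarith⟩
    simpa using add_mem_sumsetT_succ hakA (hsub hshift)

theorem stmt10 (A : Finset ℤ) (hne : A.Nonempty)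
    (hmin : A.min' hne = 0) (ak : ℤ) (hak : ak = A.max' hne) (hakpos : 0 < ak)
    (hgcd : A.gcd id = 1)
    (h t : ℕ) (hh : 0 < h) (ht : 0 < t)
    (c d : ℤ) (hc : 0 ≤ c) (hd : 0 ≤ d) (hcd : c + d ≤ ak * ((h : ℤ) - 1))
    (hsub : Set.Icc c ((h : ℤ) * ak - d) ⊆ sumsetT A h t) :
    Set.Icc c (((h : ℤ) + 1) * ak - d) ⊆ sumsetT A (h + 1) t :=
  stmt10_general A hne hmin ak hak h t c d hcd hsub
end

section
/- Let A = {a_0, a_1, ..., a_k} be a finite set of integers with 0 = a_0 < a_1 < ... < a_k and gcd(A) = 1. With h_1 = (k−1)(a_k−1)·a_k + 1, there exist nonnegative integers c_1, d_1 and finite sets C_1 ⊆ [0, c_1 − 2], D_1 ⊆ [0, d_1 − 2] such that hA = C_1 ∪ [c_1, h·a_k − d_1] ∪ (h·a_k − D_1) for all h ≥ h_1. -/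
open Finset

/-!
Every element of `hA` lies in `[0, h a_k]` and in the additive monoid `S` generated by `A`.
By Bézout, `n = ∑ f(x) x`; reducing the coefficients of the `k - 1` inner elements modulo `a_k`
and making up the difference with copies of `a_k` writes every `n ∈ [N, h a_k - N]`,
`N = (k - 1)(a_k - 1) a_k`, as a sum of at most `h` elements of `A`. For `n ≤ N ≤ h`,
membership in `hA` is membership in `S`, since a sum of positive integers equal to `n` has at
most `n` terms; near `h a_k` the same holds for the reflected set `a_k - A`. Taking `c` minimal with
`[c, N] ⊆ S`, and `d` likewise for the reflected set, gives the decomposition with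
`C = S ∩ [0, c - 2]` and `D` its reflected analogue.
-/

section Sumset

variable {A : Finset ℤ} {h : ℕ} {m n : ℤ}

theorem mem_sumsetT_one_iff :
    n ∈ sumsetT A h 1 ↔
      ∃ s : Multiset ℤ, Multiset.card s = h ∧ (∀ x ∈ s, x ∈ A) ∧ s.sum = n := by
  simp only [sumsetT, repCount, Set.mem_ofPred_eq, Nat.one_le_iff_ne_zero, ← Nat.pos_iff_ne_zero,
    Finset.card_pos, Finset.Nonempty, Finset.mem_filter, Finset.mem_sym_iff]
  constructor
  · rintro ⟨s, hsA, hsum⟩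
    exact ⟨s, s.2, fun x hx => hsA x hx, hsum⟩
  · rintro ⟨s, hcard, hsA, hsum⟩
    exact ⟨Sym.mk s hcard, fun x hx => hsA x hx, hsum⟩

theorem sum_mem_sumsetT_one (h0 : 0 ∈ A) {s : Multiset ℤ} (hsA : ∀ x ∈ s, x ∈ A)
    (hcard : Multiset.card s ≤ h) : s.sum ∈ sumsetT A h 1 := by
  refine mem_sumsetT_one_iff.mpr
    ⟨s + Multiset.replicate (h - Multiset.card s) 0, ?_, ?_, by simp⟩
  · simp only [Multiset.card_add, Multiset.card_replicate]; omega
  · intro x hx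
    rcases Multiset.mem_add.mp hx with hx | hx
    · exact hsA x hx
    · rwa [Multiset.eq_of_mem_replicate hx]

theorem sumsetT_one_subset_closure : sumsetT A h 1 ⊆ AddSubmonoid.closure (A : Set ℤ) := by
  intro n hn
  obtain ⟨s, -, hsA, rfl⟩ := mem_sumsetT_one_iff.mp hn
  exact AddSubmonoid.multiset_sum_mem _ s fun x hx => AddSubmonoid.subset_closure (hsA x hx)

theorem mem_sumsetT_one_of_mem_closure (hA : ∀ x ∈ A, 0 ≤ x) (h0 : 0 ∈ A)
    (hn : n ∈ AddSubmonoid.closure (A : Set ℤ)) (hnh : n ≤ h) : n ∈ sumsetT A h 1 := by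
  obtain ⟨s, hsA, rfl⟩ := AddSubmonoid.exists_multiset_of_mem_closure hn
  have hsum : (s.filter (1 ≤ ·)).sum = s.sum := by
    conv_rhs => rw [← Multiset.filter_add_not (1 ≤ ·) s]
    rw [Multiset.sum_add, left_eq_add]
    refine Multiset.sum_eq_zero fun x hx => ?_
    obtain ⟨hxs, hx1⟩ := Multiset.mem_filter.mp hx
    have := hA x (hsA x hxs)
    omega
  have hcard : (Multiset.card (s.filter (1 ≤ ·)) : ℤ) ≤ (s.filter (1 ≤ ·)).sum := by
    simpa only [nsmul_one] using
      Multiset.card_nsmul_le_sum (s := s.filter (1 ≤ ·)) (a := 1)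
        fun x hx => (Multiset.mem_filter.mp hx).2
  rw [← hsum]
  exact sum_mem_sumsetT_one h0 (fun x hx => hsA x (Multiset.mem_of_mem_filter hx))
    (by omega)

theorem sumsetT_one_subset_Icc (hA : (A : Set ℤ) ⊆ Set.Icc 0 m) :
    sumsetT A h 1 ⊆ Set.Icc 0 (h * m) := by
  intro n hn
  obtain ⟨s, rfl, hsA, rfl⟩ := mem_sumsetT_one_iff.mp hn
  exact ⟨Multiset.sum_nonneg fun x hx => (hA (hsA x hx)).1,
    by simpa using Multiset.sum_le_card_nsmul s m fun x hx => (hA (hsA x hx)).2⟩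

theorem sub_mem_sumsetT_one_image (hn : n ∈ sumsetT A h 1) :
    h * m - n ∈ sumsetT (A.image (m - ·)) h 1 := by
  obtain ⟨s, rfl, hsA, rfl⟩ := mem_sumsetT_one_iff.mp hn
  refine mem_sumsetT_one_iff.mpr ⟨s.map (m - ·), by simp, ?_, ?_⟩
  · intro y hy
    obtain ⟨x, hx, rfl⟩ := Multiset.mem_map.mp hy
    exact Finset.mem_image_of_mem _ (hsA x hx)
  · rw [Multiset.sum_map_sub, Multiset.map_const', Multiset.sum_replicate, nsmul_eq_mul,
      Multiset.map_id']

theorem image_sub_image_sub (A : Finset ℤ) (m : ℤ) : (A.image (m - ·)).image (m - ·) = A := by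
  simp [Finset.image_image]

theorem mem_sumsetT_one_of_sub_mem_image (hn : h * m - n ∈ sumsetT (A.image (m - ·)) h 1) :
    n ∈ sumsetT A h 1 := by
  simpa only [image_sub_image_sub, sub_sub_cancel] using sub_mem_sumsetT_one_image (m := m) hn

theorem coe_image_sub_subset_Icc (hA : (A : Set ℤ) ⊆ Set.Icc 0 m) :
    ((A.image (m - ·) : Finset ℤ) : Set ℤ) ⊆ Set.Icc 0 m := by
  intro x hx
  obtain ⟨y, hy, rfl⟩ := Finset.mem_image.mp hx
  have := hA hy
  simp only [Set.mem_Icc] at this ⊢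
  omega

end Sumset

theorem exists_Icc_subset_of_le (S : Set ℤ) {N : ℤ} (hN : 0 ≤ N) :
    ∃ c, 0 ≤ c ∧ c ≤ N + 1 ∧ Set.Icc c N ⊆ S ∧ ∀ n ∈ S, 0 ≤ n → n < c → n ≤ c - 2 := by
  classical
  have hex : ∃ j : ℕ, Set.Icc (j : ℤ) N ⊆ S :=
    ⟨(N + 1).toNat, fun n hn => absurd (hn.1.trans hn.2) (by omega)⟩
  refine ⟨Nat.find hex, by omega, ?_, Nat.find_spec hex, fun n hnS hn0 hnc => ?_⟩
  · have := Nat.find_min' hex (m := (N + 1).toNat)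
      fun n hn => absurd (hn.1.trans hn.2) (by omega)
    omega
  · by_contra! hgap
    -- otherwise `n = c - 1` and `Icc n N ⊆ S` would contradict the minimality of `c`
    have hmin := Nat.find_min' hex (m := n.toNat) fun x hx => by
      rcases eq_or_lt_of_le hx.1 with hxn | hxn
      · rwa [← hxn, Int.toNat_of_nonneg hn0]
      · exact Nat.find_spec hex ⟨by omega, hx.2⟩
    omega

theorem sumsetT_one_eq_of_Icc_subset {A : Finset ℤ} {m N : ℤ} (hA : (A : Set ℤ) ⊆ Set.Icc 0 m)
    (h0 : 0 ∈ A) (hm : m ∈ A) (hN : 0 ≤ N)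
    (hmid : ∀ h : ℕ, Set.Icc N (h * m - N) ⊆ sumsetT A h 1) :
    ∃ c d : ℤ, 0 ≤ c ∧ 0 ≤ d ∧ ∃ C D : Finset ℤ,
      ↑C ⊆ Set.Icc (0 : ℤ) (c - 2) ∧ ↑D ⊆ Set.Icc (0 : ℤ) (d - 2) ∧
      ∀ h : ℕ, N ≤ h →
        sumsetT A h 1 = ↑C ∪ Set.Icc c (h * m - d) ∪ ((fun x => (h : ℤ) * m - x) '' ↑D) := by
  classical
  set A' := A.image (m - ·)
  have hA' : (A' : Set ℤ) ⊆ Set.Icc 0 m := coe_image_sub_subset_Icc hA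
  have h0' : 0 ∈ A' := Finset.mem_image.mpr ⟨m, hm, sub_self m⟩
  set S := AddSubmonoid.closure (A : Set ℤ)
  set S' := AddSubmonoid.closure (A' : Set ℤ)
  obtain ⟨c, hc0, hcN, hcS, hcgap⟩ := exists_Icc_subset_of_le S hN
  obtain ⟨d, hd0, hdN, hdS, hdgap⟩ := exists_Icc_subset_of_le S' hN
  refine ⟨c, d, hc0, hd0, {n ∈ Finset.Icc 0 (c - 2) | n ∈ S}, {n ∈ Finset.Icc 0 (d - 2) | n ∈ S'},
    fun n hn => by simpa using (Finset.mem_filter.mp hn).1,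
    fun n hn => by simpa using (Finset.mem_filter.mp hn).1, fun h hh => ?_⟩
  have low {n : ℤ} (hnS : n ∈ S) (hnN : n ≤ N) : n ∈ sumsetT A h 1 :=
    mem_sumsetT_one_of_mem_closure (fun x hx => (hA hx).1) h0 hnS (hnN.trans hh)
  have high {n : ℤ} (hnS : h * m - n ∈ S') (hnN : h * m - n ≤ N) : n ∈ sumsetT A h 1 :=
    mem_sumsetT_one_of_sub_mem_image
      (mem_sumsetT_one_of_mem_closure (fun x hx => (hA' hx).1) h0' hnS (hnN.trans hh))
  ext n
  simp only [Set.mem_union, Finset.coe_filter, Finset.mem_Icc, Set.mem_Icc, Set.mem_image]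
  constructor
  · intro hn
    obtain ⟨hn0, hnm⟩ := sumsetT_one_subset_Icc hA hn
    have hnS : n ∈ S := sumsetT_one_subset_closure hn
    have hnS' : h * m - n ∈ S' :=
      sumsetT_one_subset_closure (sub_mem_sumsetT_one_image (m := m) hn)
    by_cases hnc : n < c
    · exact Or.inl (Or.inl ⟨⟨hn0, hcgap n hnS hn0 hnc⟩, hnS⟩)
    by_cases hnd : h * m - d < n
    · exact Or.inr ⟨h * m - n, ⟨⟨by omega, hdgap _ hnS' (by omega) (by omega)⟩, hnS'⟩, by ring⟩
    exact Or.inl (Or.inr ⟨by omega, by omega⟩)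
  · rintro ((⟨⟨hn0, hnc⟩, hnS⟩ | ⟨hcn, hnd⟩) | ⟨n', ⟨⟨hn'0, hn'd⟩, hn'S⟩, rfl⟩)
    · exact low hnS (by omega)
    · by_cases hnN : n ≤ N
      · exact low (hcS ⟨hcn, hnN⟩) hnN
      by_cases hnN' : n ≤ h * m - N
      · exact hmid h ⟨by omega, hnN'⟩
      exact high (hdS ⟨by omega, by omega⟩) (by omega)
    · exact high (by rwa [sub_sub_cancel]) (by omega)

theorem sum_natCast_mul_le {B : Finset ℤ} {m : ℤ} (r : ℤ → ℕ) (g : ℤ → ℤ)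
    (hr : ∀ x ∈ B, (r x : ℤ) < m) (hg : ∀ x ∈ B, 0 ≤ g x ∧ g x ≤ m) :
    ∑ x ∈ B, (r x : ℤ) * g x ≤ #B * ((m - 1) * m) := by
  rw [← nsmul_eq_mul]
  refine Finset.sum_le_card_nsmul _ _ _ fun x hx => ?_
  have hgx := hg x hx
  exact mul_le_mul (by linarith [hr x hx]) hgx.2 hgx.1 (by linarith [hr x hx])

theorem mem_sumsetT_one_of_dvd_sub {A B : Finset ℤ} {m n : ℤ} {h : ℕ} (hB : B ⊆ A)
    (h0 : 0 ∈ A) (hm : m ∈ A) (hm0 : 0 < m) (r : ℤ → ℕ)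
    (hdvd : m ∣ n - ∑ x ∈ B, (r x : ℤ) * x) (hle : ∑ x ∈ B, (r x : ℤ) * x ≤ n)
    (hcard : ∑ x ∈ B, (r x : ℤ) * (m - x) + n ≤ h * m) : n ∈ sumsetT A h 1 := by
  obtain ⟨t, ht⟩ := hdvd
  lift t to ℕ using (mul_nonneg_iff_of_pos_left hm0).mp (by omega)
  let s := ∑ x ∈ B, Multiset.replicate (r x) x + Multiset.replicate t m
  have hsum : s.sum = n := by
    rw [Multiset.sum_add, ← Multiset.coe_sumAddMonoidHom, map_sum]
    simp only [Multiset.coe_sumAddMonoidHom, Multiset.sum_replicate, nsmul_eq_mul]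
    linarith
  have hcard' : ((Multiset.card s : ℕ) : ℤ) * m ≤ h * m := by
    have hsplit : (∑ x ∈ B, (r x : ℤ)) * m =
        ∑ x ∈ B, (r x : ℤ) * (m - x) + ∑ x ∈ B, (r x : ℤ) * x := by
      rw [Finset.sum_mul, ← Finset.sum_add_distrib]
      exact Finset.sum_congr rfl fun x _ => by ring
    simp only [s, Multiset.card_add, Multiset.card_sum, Multiset.card_replicate]
    push_cast
    linarith
  rw [← hsum]
  exact sum_mem_sumsetT_one h0 (fun x hx => by
    rcases Multiset.mem_add.mp hx with hx | hx
    · obtain ⟨y, hy, hxy⟩ := Multiset.mem_sum.mp hx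
      rw [Multiset.eq_of_mem_replicate hxy]
      exact hB hy
    · rwa [Multiset.eq_of_mem_replicate hx])
    (by exact_mod_cast le_of_mul_le_mul_right hcard' hm0)

theorem exists_sum_mul_eq_of_gcd_eq_one_s14 {A : Finset ℤ} (hgcd : A.gcd id = 1) (n : ℤ) :
    ∃ f : ℤ → ℤ, ∑ x ∈ A, x * f x = n := by
  obtain ⟨g, hg⟩ := A.gcd_eq_sum_mul id
  refine ⟨fun x => n * g x, ?_⟩
  calc ∑ x ∈ A, x * (n * g x) = n * ∑ x ∈ A, id x * g x := by
        rw [Finset.mul_sum]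
        exact Finset.sum_congr rfl fun x _ => by rw [id]; ring
    _ = n := by rw [← hg, hgcd, mul_one]

theorem pos_of_gcd_eq_one {A : Finset ℤ} {m : ℤ} (hA : (A : Set ℤ) ⊆ Set.Icc 0 m) (hm : m ∈ A)
    (hgcd : A.gcd id = 1) : 0 < m := by
  refine lt_of_le_of_ne (hA hm).1 fun hm0 => ?_
  have : A.gcd id = 0 := Finset.gcd_eq_zero_iff.mpr fun x hx => by
    have := hA hx
    simp only [Set.mem_Icc] at this
    simp only [id]
    omega
  omega

theorem Icc_subset_sumsetT_one {A : Finset ℤ} {m : ℤ} (hA : (A : Set ℤ) ⊆ Set.Icc 0 m)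
    (h0 : 0 ∈ A) (hm : m ∈ A) (hgcd : A.gcd id = 1) (h : ℕ) :
    Set.Icc (((#A : ℤ) - 2) * (m - 1) * m) (h * m - ((#A : ℤ) - 2) * (m - 1) * m) ⊆
      sumsetT A h 1 := by
  classical
  rintro n ⟨hlo, hhi⟩
  have hm0 : 0 < m := pos_of_gcd_eq_one hA hm hgcd
  obtain ⟨f, hn⟩ := exists_sum_mul_eq_of_gcd_eq_one_s14 hgcd n
  set B := A \ {0, m}
  have hpair : {0, m} ⊆ A := Finset.insert_subset h0 (Finset.singleton_subset_iff.mpr hm)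
  set r : ℤ → ℕ := fun x => (f x % m).toNat
  have hr x : (r x : ℤ) = f x % m := Int.toNat_of_nonneg (Int.emod_nonneg _ hm0.ne')
  have hdvd : m ∣ n - ∑ x ∈ B, (r x : ℤ) * x := by
    have hsplit : n = ∑ x ∈ B, x * f x + m * f m := by
      rw [← hn, ← Finset.sum_sdiff hpair, Finset.sum_pair hm0.ne]
      ring
    have hred x : (r x : ℤ) * x = x * f x - m * (x * (f x / m)) := by
      rw [hr, Int.emod_def]
      ring
    rw [Finset.sum_congr rfl fun x _ => hred x, Finset.sum_sub_distrib, ← Finset.mul_sum, hsplit]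
    exact ⟨f m + ∑ x ∈ B, x * (f x / m), by ring⟩
  have hBm : ∀ x ∈ B, 0 ≤ x ∧ x ≤ m := fun x hx => hA (Finset.sdiff_subset hx)
  have hrm : ∀ x ∈ B, (r x : ℤ) < m := fun x _ => hr x ▸ Int.emod_lt_of_pos _ hm0
  have hμ := sum_natCast_mul_le r (fun x => x) hrm hBm
  have hμ' := sum_natCast_mul_le r (m - ·) hrm fun x hx => by
    have := hBm x hx
    constructor <;> omega
  have hcard : (#B : ℤ) = #A - 2 := by
    have := Finset.card_le_card hpair
    rw [Finset.card_pair hm0.ne] at this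
    rw [Finset.card_sdiff_of_subset hpair, Finset.card_pair hm0.ne]
    omega
  rw [hcard] at hμ hμ'
  exact mem_sumsetT_one_of_dvd_sub Finset.sdiff_subset h0 hm hm0 r hdvd (by linarith)
    (by linarith)

theorem stmt14 (k : ℕ) (hk : 1 ≤ k) (a : ℕ → ℤ)
    (ha0 : a 0 = 0) (hmono : ∀ i j, i ≤ k → j ≤ k → i < j → a i < a j)
    (A : Finset ℤ) (hA : A = (Finset.range (k + 1)).image a)
    (hgcd : A.gcd id = 1)
    (h1 : ℕ) (hh1 : (h1 : ℤ) = ((k : ℤ) - 1) * (a k - 1) * a k + 1) :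
    ∃ c d : ℤ, 0 ≤ c ∧ 0 ≤ d ∧ ∃ C D : Finset ℤ,
      ↑C ⊆ Set.Icc (0 : ℤ) (c - 2) ∧ ↑D ⊆ Set.Icc (0 : ℤ) (d - 2) ∧
      ∀ h : ℕ, h1 ≤ h →
        sumsetT A h 1 =
          ↑C ∪ Set.Icc c ((h : ℤ) * a k - d) ∪ ((fun x => (h : ℤ) * a k - x) '' ↑D) := by
  have hmonoOn : StrictMonoOn a (Set.Iic k) := fun i hi j hj hij => hmono i j hi hj hij
  have hrange : ∀ i ∈ Finset.range (k + 1), i ∈ Set.Iic k := fun i hi =>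
    Nat.lt_succ_iff.mp (Finset.mem_range.mp hi)
  have hAIcc : (A : Set ℤ) ⊆ Set.Icc 0 (a k) := by
    intro x hx
    rw [hA, Finset.coe_image] at hx
    obtain ⟨i, hi, rfl⟩ := hx
    have hik := hrange i hi
    refine ⟨ha0 ▸ hmonoOn.monotoneOn (Nat.zero_le k) hik (Nat.zero_le i), ?_⟩
    exact hmonoOn.monotoneOn hik (le_refl k) hik
  have h0 : 0 ∈ A := hA ▸ Finset.mem_image.mpr ⟨0, by simp, ha0⟩
  have hak : a k ∈ A := hA ▸ Finset.mem_image.mpr ⟨k, by simp, rfl⟩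
  have hcard : ((#A : ℤ) - 2) = k - 1 := by
    rw [hA, Finset.card_image_of_injOn (hmonoOn.injOn.mono hrange), Finset.card_range]
    push_cast
    ring
  have hN : 0 ≤ ((k : ℤ) - 1) * (a k - 1) * a k := by
    have := ha0 ▸ hmono 0 k (Nat.zero_le k) le_rfl hk
    exact mul_nonneg (mul_nonneg (by omega) (by omega)) this.le
  obtain ⟨c, d, hc, hd, C, D, hC, hD, hsumset⟩ := sumsetT_one_eq_of_Icc_subset hAIcc h0 hak hN
    fun h => hcard ▸ Icc_subset_sumsetT_one hAIcc h0 hak hgcd h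
  refine ⟨c, d, hc, hd, C, D, hC, hD, fun h hh => hsumset h ?_⟩
  have : (h1 : ℤ) ≤ h := Nat.cast_le.mpr hh
  linarith
end

section
/- Let k ≥ 2 and A = {a_0, ..., a_k} with 0 = a_0 < a_1 < ... < a_k and gcd(A) = 1. For every positive integer t, if n is an integer with (t·a_k − 1)·Σ_{j=1}^{k−1} a_j ≤ n ≤ h·a_k − (k−1)(t·a_k − 1)·a_k, then for each s ∈ [1,t] there exist nonnegative integers x_{1,s}, ..., x_{k,s} with (s−1)·a_k ≤ x_{j,s} ≤ s·a_k − 1 for j ≤ k−1, Σ_{j=1}^k x_{j,s}·a_j = n, and Σ_{j=1}^k x_{j,s} ≤ h − (k−1)(t−s)·a_k ≤ h. -/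
/-!
By Bézout, `gcd A = 1` writes `n = ∑ y j * a j` with integer coefficients. Moving each `y j` with
`0 < j < k` into the window `[(s - 1) a_k, s a_k)` changes it by a multiple of `a_k`, and these
changes are absorbed into the coefficient of `a_k`. The lower bound on `n` makes that last
coefficient nonnegative, and the upper bound on `n` bounds it, hence the number of summands.
-/

open Finset

theorem exists_sum_mul_eq_of_gcd_eq_one_s16 {ι : Type*} {s : Finset ι} {b : ι → ℤ} (h : s.gcd b = 1)
    (n : ℤ) : ∃ y : ι → ℤ, ∑ i ∈ s, y i * b i = n := by
  obtain ⟨g, hg⟩ := s.gcd_eq_sum_mul b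
  refine ⟨fun i ↦ n * g i, ?_⟩
  rw [h] at hg
  calc ∑ i ∈ s, n * g i * b i = n * ∑ i ∈ s, b i * g i := by
        rw [mul_sum]; exact sum_congr rfl fun _ _ ↦ by ring
    _ = n := by rw [← hg, mul_one]

theorem exists_sum_mul_Ioc_eq {k : ℕ} {a : ℕ → ℤ} (ha0 : a 0 = 0) (hgcd : (range (k + 1)).gcd a = 1)
    (n : ℤ) : ∃ y : ℕ → ℤ, ∑ j ∈ Ioc 0 k, y j * a j = n := by
  obtain ⟨y, hy⟩ := exists_sum_mul_eq_of_gcd_eq_one_s16 hgcd n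
  refine ⟨y, (sum_subset (fun j hj ↦ ?_) fun j hj hj' ↦ ?_).trans hy⟩
  · simp only [mem_Ioc, mem_range] at hj ⊢; omega
  · obtain rfl : j = 0 := by simp only [mem_Ioc, mem_range] at hj hj'; omega
    rw [ha0, mul_zero]

theorem exists_coeffs_mem_Ico_sum_mul_eq {ι : Type*} [DecidableEq ι] {s : Finset ι} {i₀ : ι}
    (hi₀ : i₀ ∈ s) {b : ι → ℤ} (hb₀ : 0 < b i₀) (hb : ∀ i ∈ s, 0 ≤ b i) {n : ℤ}
    (hrep : ∃ y : ι → ℤ, ∑ i ∈ s, y i * b i = n) (L : ℤ)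
    (hn : (L + b i₀ - 1) * ∑ i ∈ s.erase i₀, b i ≤ n) :
    ∃ x : ι → ℤ, (∀ i ∈ s.erase i₀, x i ∈ Set.Ico L (L + b i₀)) ∧ 0 ≤ x i₀ ∧
      ∑ i ∈ s, x i * b i = n := by
  obtain ⟨y, rfl⟩ := hrep
  set r := fun i ↦ toIcoMod hb₀ L (y i)
  set z := y i₀ + ∑ i ∈ s.erase i₀, toIcoDiv hb₀ L (y i) * b i
  have hsum : z * b i₀ + ∑ i ∈ s.erase i₀, r i * b i = ∑ i ∈ s, y i * b i := by
    rw [← add_sum_erase s _ hi₀, add_mul, sum_mul, add_assoc, ← sum_add_distrib]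
    congr 1
    refine sum_congr rfl fun i _ ↦ ?_
    linear_combination b i * toIcoMod_add_toIcoDiv_mul hb₀ L (y i)
  have hr : ∀ i ∈ s.erase i₀, r i ∈ Set.Ico L (L + b i₀) := fun i _ ↦ toIcoMod_mem_Ico _ _ _
  have hr_le : ∑ i ∈ s.erase i₀, r i * b i ≤ (L + b i₀ - 1) * ∑ i ∈ s.erase i₀, b i := by
    rw [mul_sum]
    exact sum_le_sum fun i hi ↦
      mul_le_mul_of_nonneg_right (Int.le_sub_one_of_lt (hr i hi).2) (hb i (mem_of_mem_erase hi))
  refine ⟨Function.update r i₀ z, fun i hi ↦ ?_, ?_, ?_⟩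
  · rw [Function.update_of_ne (ne_of_mem_erase hi)]
    exact hr i hi
  · rw [Function.update_self]
    exact nonneg_of_mul_nonneg_left (by linarith) hb₀
  · rw [← add_sum_erase s _ hi₀, ← hsum, Function.update_self]
    congr 1
    exact sum_congr rfl fun i hi ↦ by rw [Function.update_of_ne (ne_of_mem_erase hi)]

theorem sum_le_of_mem_Ico {ι : Type*} [DecidableEq ι] {s : Finset ι} {i₀ : ι} (hi₀ : i₀ ∈ s)
    {b x : ι → ℤ} (hb₀ : 0 < b i₀) (hb : ∀ i ∈ s, 0 ≤ b i) {L H : ℤ} (hL : 0 ≤ L)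
    (hx : ∀ i ∈ s.erase i₀, x i ∈ Set.Ico L (L + b i₀)) (hxH : ∑ i ∈ s, x i * b i ≤ H * b i₀) :
    ∑ i ∈ s, x i ≤ H + #(s.erase i₀) * (L + b i₀ - 1) := by
  rw [← add_sum_erase s _ hi₀] at hxH ⊢
  have hrest : 0 ≤ ∑ i ∈ s.erase i₀, x i * b i :=
    sum_nonneg fun i hi ↦ mul_nonneg (hL.trans (hx i hi).1) (hb i (mem_of_mem_erase hi))
  have hxi₀ : x i₀ ≤ H := le_of_mul_le_mul_right (by linarith) hb₀
  have hwin : ∑ i ∈ s.erase i₀, x i ≤ #(s.erase i₀) • (L + b i₀ - 1) :=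
    sum_le_card_nsmul _ _ _ fun i hi ↦ Int.le_sub_one_of_lt (hx i hi).2
  rw [nsmul_eq_mul] at hwin
  linarith

theorem Fin.sum_univ_eq_sum_Ioc {M : Type*} [AddCommMonoid M] (f : ℕ → M) (k : ℕ) :
    ∑ j : Fin k, f (j + 1) = ∑ j ∈ Ioc 0 k, f j := by
  induction k with
  | zero => simp
  | succ k ih => rw [Fin.sum_univ_castSucc, sum_Ioc_succ_top k.zero_le, ← ih]; rfl

theorem stmt16_general (k : ℕ) (hk : 2 ≤ k) (a : ℕ → ℤ)
    (ha0 : a 0 = 0) (hmono : ∀ i j, i ≤ k → j ≤ k → i < j → a i < a j)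
    (hgcd : ((Finset.range (k + 1)).image a).gcd id = 1)
    (t h : ℕ)
    (n : ℤ)
    (hn1 : ((t : ℤ) * a k - 1) * ∑ j ∈ Finset.Icc 1 (k - 1), a j ≤ n)
    (hn2 : n ≤ (h : ℤ) * a k - ((k : ℤ) - 1) * ((t : ℤ) * a k - 1) * a k) :
    ∀ s : ℕ, 1 ≤ s → s ≤ t →
      ∃ x : Fin k → ℕ,
        (∀ j : Fin k, (j : ℕ) + 1 ≤ k - 1 →
          ((s : ℤ) - 1) * a k ≤ (x j : ℤ) ∧ (x j : ℤ) ≤ (s : ℤ) * a k - 1) ∧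
        (∑ j : Fin k, (x j : ℤ) * a ((j : ℕ) + 1) = n) ∧
        (∑ j : Fin k, (x j : ℤ)) ≤ (h : ℤ) - ((k : ℤ) - 1) * ((t : ℤ) - (s : ℤ)) * a k ∧
        (h : ℤ) - ((k : ℤ) - 1) * ((t : ℤ) - (s : ℤ)) * a k ≤ (h : ℤ) := by
  intro s hs1 hst
  have hst' : (s : ℤ) ≤ t := by exact_mod_cast hst
  have hk_mem : k ∈ Ioc 0 k := right_mem_Ioc.2 (by omega)
  have hK : 0 < a k := ha0 ▸ hmono 0 k k.zero_le le_rfl (by omega)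
  have hb : ∀ j ∈ Ioc 0 k, 0 ≤ a j := fun j hj ↦
    (ha0 ▸ hmono 0 j k.zero_le (mem_Ioc.1 hj).2 (mem_Ioc.1 hj).1).le
  have hmid : (Ioc 0 k).erase k = Icc 1 (k - 1) := by
    ext; simp only [mem_erase, mem_Ioc, mem_Icc]; omega
  have hL : 0 ≤ ((s : ℤ) - 1) * a k := mul_nonneg (by omega) hK.le
  have hwin : ((s - 1) * a k + a k - 1) * ∑ j ∈ (Ioc 0 k).erase k, a j ≤ n := by
    have hmid_nonneg : 0 ≤ ∑ j ∈ (Ioc 0 k).erase k, a j :=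
      sum_nonneg fun j hj ↦ hb j (mem_of_mem_erase hj)
    exact (mul_le_mul_of_nonneg_right (by nlinarith) hmid_nonneg).trans (hmid ▸ hn1)
  obtain ⟨x, hx, hxk, hxn⟩ := exists_coeffs_mem_Ico_sum_mul_eq hk_mem hK hb
    (exists_sum_mul_Ioc_eq ha0 (by rwa [gcd_image] at hgcd) n) ((s - 1) * a k) hwin
  have hcast : ∀ j : Fin k, ((x (j + 1)).toNat : ℤ) = x (j + 1) := fun j ↦ by
    refine Int.toNat_of_nonneg ?_
    rcases eq_or_ne ((j : ℕ) + 1) k with hj | hj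
    · rwa [hj]
    · exact hL.trans (hx _ (by simp only [mem_erase, mem_Ioc]; omega)).1
  have hcard : (#((Ioc 0 k).erase k) : ℤ) = k - 1 := by
    rw [card_erase_of_mem hk_mem, Nat.card_Ioc]; omega
  have hsum := sum_le_of_mem_Ico hk_mem hK hb hL hx (H := h - (k - 1) * (t * a k - 1))
    ((hxn.trans_le hn2).trans_eq (by ring))
  refine ⟨fun j ↦ (x (j + 1)).toNat, fun j hj ↦ ?_, ?_, ?_, ?_⟩
  · have hxj := hx (j + 1) (by simp only [mem_erase, mem_Ioc]; omega)
    rw [hcast]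
    exact ⟨hxj.1, by linarith [Int.le_sub_one_of_lt hxj.2]⟩
  · simpa only [hcast] using (Fin.sum_univ_eq_sum_Ioc (fun j ↦ x j * a j) k).trans hxn
  · simp only [hcast, Fin.sum_univ_eq_sum_Ioc x]
    rw [hcard] at hsum
    linarith
  · exact sub_le_self _ (mul_nonneg (mul_nonneg (by omega) (by omega)) hK.le)

theorem stmt16 (k : ℕ) (hk : 2 ≤ k) (a : ℕ → ℤ)
    (ha0 : a 0 = 0) (hmono : ∀ i j, i ≤ k → j ≤ k → i < j → a i < a j)
    (hgcd : ((Finset.range (k + 1)).image a).gcd id = 1)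
    (t h : ℕ) (ht : 0 < t) (hh : 0 < h)
    (n : ℤ)
    (hn1 : ((t : ℤ) * a k - 1) * ∑ j ∈ Finset.Icc 1 (k - 1), a j ≤ n)
    (hn2 : n ≤ (h : ℤ) * a k - ((k : ℤ) - 1) * ((t : ℤ) * a k - 1) * a k) :
    ∀ s : ℕ, 1 ≤ s → s ≤ t →
      ∃ x : Fin k → ℕ,
        (∀ j : Fin k, (j : ℕ) + 1 ≤ k - 1 →
          ((s : ℤ) - 1) * a k ≤ (x j : ℤ) ∧ (x j : ℤ) ≤ (s : ℤ) * a k - 1) ∧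
        (∑ j : Fin k, (x j : ℤ) * a ((j : ℕ) + 1) = n) ∧
        (∑ j : Fin k, (x j : ℤ)) ≤ (h : ℤ) - ((k : ℤ) - 1) * ((t : ℤ) - (s : ℤ)) * a k ∧
        (h : ℤ) - ((k : ℤ) - 1) * ((t : ℤ) - (s : ℤ)) * a k ≤ (h : ℤ) :=
  stmt16_general k hk a ha0 hmono hgcd t h n hn1 hn2
end
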